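/- Let S and M be symmetric positive definite real N×N matrices, f ∈ ℝ^N, and for y ≥ 0 set w₋(y) := (S + e^{-y} M)^{-1} f and w₊(y) := (e^{-y} S + M)^{-1} f. Let (y_{j,σ}, τ_{j,σ})_{j=1}^{M_σ}, σ ∈ {+,-}, be quadrature rules with nonnegative nodes, nonnegative weights, and Σ_j τ_{j,σ} ≤ 1 for each σ. For s ∈ (0,1) put s₋ := 1-s, s₊ := s, β₀(t) := sin(πt)/(πt), and define ũ(s) := Σ_σ β₀(s_σ) ∫₀^∞ w_σ(y/s_σ) e^{-y} dy and u(s) := Σ_σ β₀(s_σ) Σ_{j=1}^{M_σ} τ_{j,σ} w_σ(y_{j,σ}/s_σ). Then for every s ∈ (0,1): ‖u(s) − ũ(s)‖_M ≤ (8/π) · max(1, 1/λ_min(S,M)) · ‖f‖_{M^{-1}}. -/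

import Mathlib

/-!
Measured through `x ↦ M^{1/2} x`, the `M`-norm becomes a Euclidean norm, so Bochner integrals and
finite sums can be estimated by the triangle inequality. Testing `(S + e^{-y} M) w = f` against `w`
gives `λ_min(S, M) ‖w‖_M² ≤ (w, M⁻¹ f)_M ≤ ‖w‖_M ‖f‖_{M⁻¹}`, and similarly with constant `1` for
`(e^{-y} S + M) w = f`; hence every `w_σ(y)` lies in the `M`-ball of radius
`max(1, 1/λ_min) ‖f‖_{M⁻¹}`. The quadrature weights and the density `e^{-y}` both have mass at most
one, so the quadrature value and the integral lie in that ball too and differ by at most twice its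
radius. Finally `β₀(1 - s) + β₀(s) = sin(π s) / (π s (1 - s)) ≤ 4/π` because
`sin(π s) ≤ 4 s (1 - s)` on `[0, 1]`.
-/

open Matrix MeasureTheory Real Set

/-- The smallest generalized eigenvalue of the pair `(S, M)`:
`λ_min(S, M) = inf_{x ≠ 0} (xᵀ S x)/(xᵀ M x)`. -/
noncomputable def lamMinGen {N : ℕ} (S M : Matrix (Fin N) (Fin N) ℝ) : ℝ :=
  sInf ((fun x : Fin N → ℝ => (x ⬝ᵥ S.mulVec x) / (x ⬝ᵥ M.mulVec x)) '' {x | x ≠ 0})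

/-- The `M`-norm `‖x‖_M = √(xᵀ M x)`. -/
noncomputable def normWeighted {N : ℕ} (M : Matrix (Fin N) (Fin N) ℝ) (x : Fin N → ℝ) : ℝ :=
  Real.sqrt (x ⬝ᵥ M.mulVec x)

/-- `w₋(y) = (S + e^{-y} M)⁻¹ f`. -/
noncomputable def wMinus {N : ℕ} (S M : Matrix (Fin N) (Fin N) ℝ) (f : Fin N → ℝ)
    (y : ℝ) : Fin N → ℝ :=
  (S + Real.exp (-y) • M)⁻¹.mulVec f

/-- `w₊(y) = (e^{-y} S + M)⁻¹ f`. -/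
noncomputable def wPlus {N : ℕ} (S M : Matrix (Fin N) (Fin N) ℝ) (f : Fin N → ℝ)
    (y : ℝ) : Fin N → ℝ :=
  (Real.exp (-y) • S + M)⁻¹.mulVec f

/-- `β₀(t) = sin(πt)/(πt)`. -/
noncomputable def beta0 (t : ℝ) : ℝ := Real.sin (Real.pi * t) / (Real.pi * t)

namespace Real

lemma cos_le_one_sub_four_div_pi_sq_mul_sq {y : ℝ} (hy : |y| ≤ π / 2) :
    cos y ≤ 1 - 4 / π ^ 2 * y ^ 2 := by
  wlog hy₀ : 0 ≤ y generalizing y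
  · simpa using this (y := -y) (by rwa [abs_neg]) (by linarith)
  rw [abs_of_nonneg hy₀] at hy
  have hπ₀ := pi_gt_three
  rcases le_or_gt y 1 with hy₁ | hy₁
  · -- the fourth-order Taylor bound suffices on `[0, 1]` (but not up to `π / 2`)
    have hcos := (abs_le.1 (cos_bound (x := y) (by rwa [abs_of_nonneg hy₀]))).2
    rw [abs_of_nonneg hy₀] at hcos
    have hπ : 4 / π ^ 2 ≤ 4 / 9 := by gcongr; nlinarith
    nlinarith [mul_le_mul_of_nonneg_right hπ (sq_nonneg y),
      pow_le_pow_of_le_one hy₀ hy₁ (by norm_num : 2 ≤ 4)]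
  · -- on `[1, π / 2]`, use the tangent line of `cos` at `π / 2`, which lies below the parabola
    have hsin : cos y ≤ π / 2 - y := by
      rw [← sin_pi_div_two_sub]; exact sin_le (by linarith)
    have hπ₁ := pi_lt_d2
    rw [show 1 - 4 / π ^ 2 * y ^ 2 = (π ^ 2 - 4 * y ^ 2) / π ^ 2 by field_simp,
      le_div_iff₀ (by positivity)]
    have hfactor : 0 ≤ 2 * π + 4 * y - π ^ 2 := by nlinarith
    nlinarith [mul_nonneg (sub_nonneg.2 hy) hfactor, mul_le_mul_of_nonneg_right hsin (sq_nonneg π)]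

lemma sin_pi_mul_le {s : ℝ} (hs₀ : 0 ≤ s) (hs₁ : s ≤ 1) : sin (π * s) ≤ 4 * s * (1 - s) := by
  have hπ := pi_pos
  have h := cos_le_one_sub_four_div_pi_sq_mul_sq (y := π * s - π / 2)
    (abs_le.2 ⟨by nlinarith, by nlinarith⟩)
  rw [cos_sub_pi_div_two] at h
  convert h using 1
  field_simp
  ring

end Real

lemma beta0_nonneg {t : ℝ} (ht₀ : 0 ≤ t) (ht₁ : t ≤ 1) : 0 ≤ beta0 t :=
  div_nonneg (Real.sin_nonneg_of_nonneg_of_le_pi (by positivity) (by nlinarith [pi_pos]))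
    (by positivity)

lemma beta0_one_sub_add_beta0_le {s : ℝ} (hs₀ : 0 < s) (hs₁ : s < 1) :
    beta0 (1 - s) + beta0 s ≤ 4 / π := by
  have hs₁' : 0 < 1 - s := sub_pos.2 hs₁
  have hsin := Real.sin_pi_mul_le hs₀.le hs₁.le
  have hsum : beta0 (1 - s) + beta0 s = sin (π * s) / (s * (1 - s)) / π := by
    rw [beta0, beta0, show π * (1 - s) = π - π * s by ring, sin_pi_sub]
    field_simp
    ring
  rw [hsum, div_le_div_iff_of_pos_right pi_pos, div_le_iff₀ (by positivity)]
  linarith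

section NormedSpace

variable {E F : Type*} [NormedAddCommGroup E] [NormedSpace ℝ E]
  [NormedAddCommGroup F] [NormedSpace ℝ F]

lemma norm_sum_smul_le_of_sum_le_one {ι : Type*} [Fintype ι] {τ : ι → ℝ} {v : ι → E} {C : ℝ}
    (hτ : ∀ j, 0 ≤ τ j) (hτsum : ∑ j, τ j ≤ 1) (hC : 0 ≤ C) (hv : ∀ j, ‖v j‖ ≤ C) :
    ‖∑ j, τ j • v j‖ ≤ C := calc
  _ ≤ ∑ j, τ j * C := (norm_sum_le _ _).trans <| Finset.sum_le_sum fun j _ => by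
    rw [norm_smul, Real.norm_of_nonneg (hτ j)]
    exact mul_le_mul_of_nonneg_left (hv j) (hτ j)
  _ = (∑ j, τ j) * C := (Finset.sum_mul _ _ _).symm
  _ ≤ C := mul_le_of_le_one_left hC hτsum

lemma norm_setIntegral_exp_neg_smul_le {v : ℝ → E} {C : ℝ} (hv : ∀ t, 0 < t → ‖v t‖ ≤ C) :
    ‖∫ t in Ioi 0, exp (-t) • v t‖ ≤ C := calc
  _ ≤ ∫ t in Ioi 0, C * exp (-t) := by
    refine norm_integral_le_of_norm_le ((integrableOn_exp_neg_Ioi 0).const_mul C) ?_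
    refine (ae_restrict_iff' measurableSet_Ioi).2 (Filter.Eventually.of_forall fun t ht => ?_)
    rw [norm_smul, Real.norm_of_nonneg (exp_nonneg _), mul_comm]
    exact mul_le_mul_of_nonneg_right (hv t ht) (exp_nonneg _)
  _ = C := by rw [integral_const_mul, integral_exp_neg_Ioi_zero, mul_one]

lemma ContinuousLinearEquiv.norm_map_sum_smul_sub_map_integral_le (L : E ≃L[ℝ] F)
    {w : ℝ → E} {C : ℝ} (hC : 0 ≤ C) (hw : ∀ y, ‖L (w y)‖ ≤ C)
    {ι : Type*} [Fintype ι] (y τ : ι → ℝ) (hτ : ∀ j, 0 ≤ τ j) (hτsum : ∑ j, τ j ≤ 1) :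
    ‖L (∑ j, τ j • w (y j)) - L (∫ t in Ioi 0, exp (-t) • w t)‖ ≤ 2 * C := by
  have hsum : ‖L (∑ j, τ j • w (y j))‖ ≤ C := by
    simpa only [map_sum, map_smul] using
      norm_sum_smul_le_of_sum_le_one hτ hτsum hC fun j => hw (y j)
  have hint : ‖L (∫ t in Ioi 0, exp (-t) • w t)‖ ≤ C := by
    simpa only [← L.integral_comp_comm, map_smul] using
      norm_setIntegral_exp_neg_smul_le fun t _ => hw t
  linarith [norm_sub_le (L (∑ j, τ j • w (y j))) (L (∫ t in Ioi 0, exp (-t) • w t))]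

lemma norm_smul_add_smul_le {a b C : ℝ} (ha : 0 ≤ a) (hb : 0 ≤ b) {x y : E}
    (hx : ‖x‖ ≤ C) (hy : ‖y‖ ≤ C) : ‖a • x + b • y‖ ≤ (a + b) * C := calc
  _ ≤ a * ‖x‖ + b * ‖y‖ := by
    refine (norm_add_le _ _).trans_eq ?_
    rw [norm_smul, norm_smul, Real.norm_of_nonneg ha, Real.norm_of_nonneg hb]
  _ ≤ (a + b) * C := by rw [add_mul]; gcongr

end NormedSpace

section Sqrt

open scoped MatrixOrder InnerProductSpace

variable {n : Type*} [Fintype n] [DecidableEq n] {M : Matrix n n ℝ}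

noncomputable def Matrix.sqrtLin (M : Matrix n n ℝ) : (n → ℝ) →ₗ[ℝ] EuclideanSpace ℝ n :=
  (WithLp.linearEquiv 2 ℝ (n → ℝ)).symm.toLinearMap ∘ₗ (CFC.sqrt M).mulVecLin

lemma Matrix.inner_sqrtLin (hM : M.PosSemidef) (x y : n → ℝ) :
    ⟪M.sqrtLin x, M.sqrtLin y⟫_ℝ = x ⬝ᵥ M *ᵥ y := by
  have hsymm : (CFC.sqrt M)ᵀ = CFC.sqrt M := (CFC.sqrt_nonneg M).posSemidef.1
  have hsq : CFC.sqrt M * CFC.sqrt M = M := CFC.sqrt_mul_sqrt_self M hM.nonneg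
  change (CFC.sqrt M *ᵥ y) ⬝ᵥ (CFC.sqrt M *ᵥ x) = x ⬝ᵥ M *ᵥ y
  rw [dotProduct_mulVec, ← mulVec_transpose, hsymm, mulVec_mulVec, hsq, dotProduct_comm]

lemma Matrix.PosDef.injective_sqrtLin (hM : M.PosDef) : Function.Injective M.sqrtLin := by
  rw [← LinearMap.ker_eq_bot, LinearMap.ker_eq_bot']
  intro x hx
  by_contra hne
  have hpos := hM.dotProduct_mulVec_pos hne
  rw [star_trivial, ← inner_sqrtLin hM.posSemidef, hx, inner_zero_left] at hpos
  exact hpos.false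

noncomputable def Matrix.PosDef.sqrtEquiv (hM : M.PosDef) : (n → ℝ) ≃L[ℝ] EuclideanSpace ℝ n :=
  (M.sqrtLin.linearEquivOfInjective hM.injective_sqrtLin (by simp)).toContinuousLinearEquiv

end Sqrt

section Weighted

variable {N : ℕ} {M S : Matrix (Fin N) (Fin N) ℝ}

lemma normWeighted_nonneg (M : Matrix (Fin N) (Fin N) ℝ) (x : Fin N → ℝ) :
    0 ≤ normWeighted M x :=
  Real.sqrt_nonneg _

lemma norm_sqrtLin (hM : M.PosSemidef) (x : Fin N → ℝ) : ‖M.sqrtLin x‖ = normWeighted M x := by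
  rw [normWeighted, ← inner_sqrtLin hM, real_inner_self_eq_norm_sq, Real.sqrt_sq (norm_nonneg _)]

lemma norm_sqrtEquiv (hM : M.PosDef) (x : Fin N → ℝ) : ‖hM.sqrtEquiv x‖ = normWeighted M x :=
  norm_sqrtLin hM.posSemidef x

lemma sq_normWeighted (hM : M.PosSemidef) (x : Fin N → ℝ) :
    normWeighted M x ^ 2 = x ⬝ᵥ M *ᵥ x := by
  rw [← norm_sqrtLin hM, ← real_inner_self_eq_norm_sq, inner_sqrtLin hM]

lemma dotProduct_mulVec_le_normWeighted_mul (hM : M.PosSemidef) (x y : Fin N → ℝ) :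
    x ⬝ᵥ M *ᵥ y ≤ normWeighted M x * normWeighted M y := by
  rw [← inner_sqrtLin hM, ← norm_sqrtLin hM, ← norm_sqrtLin hM]
  exact real_inner_le_norm _ _

lemma normWeighted_inv_mulVec (hM : M.PosDef) (f : Fin N → ℝ) :
    normWeighted M (M⁻¹ *ᵥ f) = normWeighted M⁻¹ f := by
  rw [normWeighted, normWeighted, mulVec_mulVec,
    mul_nonsing_inv _ (isUnit_iff_ne_zero.2 hM.det_pos.ne'), one_mulVec, dotProduct_comm]

/-- Testing `A w = f` against `w` gives `c ‖w‖_M² ≤ w ⬝ f = (w, M⁻¹ f)_M ≤ ‖w‖_M ‖f‖_{M⁻¹}`.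
For singular `A` the junk value `A⁻¹ = 0` makes the claim trivial. -/
lemma mul_normWeighted_inv_mulVec_le (hM : M.PosDef) {A : Matrix (Fin N) (Fin N) ℝ} {c : ℝ}
    (hAc : ∀ x, c * (x ⬝ᵥ M *ᵥ x) ≤ x ⬝ᵥ A *ᵥ x) (f : Fin N → ℝ) :
    c * normWeighted M (A⁻¹ *ᵥ f) ≤ normWeighted M⁻¹ f := by
  by_cases hA : IsUnit A.det
  swap
  · rw [nonsing_inv_apply_not_isUnit _ hA, zero_mulVec]
    simp [normWeighted]
  set w := A⁻¹ *ᵥ f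
  have hAw : A *ᵥ w = M *ᵥ (M⁻¹ *ᵥ f) := by
    simp only [w, mulVec_mulVec, mul_nonsing_inv _ hA,
      mul_nonsing_inv _ (isUnit_iff_ne_zero.2 hM.det_pos.ne')]
  have key : normWeighted M w * (c * normWeighted M w) ≤
      normWeighted M w * normWeighted M⁻¹ f := calc
    _ = c * (w ⬝ᵥ M *ᵥ w) := by rw [← sq_normWeighted hM.posSemidef]; ring
    _ ≤ w ⬝ᵥ A *ᵥ w := hAc w
    _ ≤ normWeighted M w * normWeighted M (M⁻¹ *ᵥ f) := by
      rw [hAw]; exact dotProduct_mulVec_le_normWeighted_mul hM.posSemidef _ _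
    _ = normWeighted M w * normWeighted M⁻¹ f := by rw [normWeighted_inv_mulVec hM]
  rcases (normWeighted_nonneg M w).eq_or_lt with h0 | hpos
  · rw [← h0, mul_zero]; exact normWeighted_nonneg _ _
  · exact le_of_mul_le_mul_left key hpos

lemma lamMinGen_mul_le (hS : S.PosSemidef) (hM : M.PosSemidef) (x : Fin N → ℝ) :
    lamMinGen S M * (x ⬝ᵥ M *ᵥ x) ≤ x ⬝ᵥ S *ᵥ x := by
  have hS₀ : ∀ x : Fin N → ℝ, 0 ≤ x ⬝ᵥ S *ᵥ x := by simpa using hS.dotProduct_mulVec_nonneg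
  have hM₀ : ∀ x : Fin N → ℝ, 0 ≤ x ⬝ᵥ M *ᵥ x := by simpa using hM.dotProduct_mulVec_nonneg
  rcases (hM₀ x).eq_or_lt with h0 | hpos
  · rw [← h0, mul_zero]; exact hS₀ x
  · have hx : x ≠ 0 := by rintro rfl; simp at hpos
    have hbdd :
        BddBelow ((fun x : Fin N → ℝ => (x ⬝ᵥ S *ᵥ x) / (x ⬝ᵥ M *ᵥ x)) '' {x | x ≠ 0}) :=
      ⟨0, by rintro _ ⟨y, -, rfl⟩; exact div_nonneg (hS₀ y) (hM₀ y)⟩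
    rw [← le_div_iff₀ hpos]
    exact csInf_le hbdd ⟨x, hx, rfl⟩

lemma exists_normWeighted_le_mul (hS : S.PosDef) (hM : M.PosSemidef) :
    ∃ K, ∀ x, normWeighted M x ≤ K * normWeighted S x := by
  let L := (LinearMap.toContinuousLinearMap M.sqrtLin).comp
    (hS.sqrtEquiv.symm : EuclideanSpace ℝ (Fin N) →L[ℝ] Fin N → ℝ)
  refine ⟨‖L‖, fun x => ?_⟩
  simpa [L, norm_sqrtLin hM, norm_sqrtEquiv hS] using L.le_opNorm (hS.sqrtEquiv x)

lemma lamMinGen_pos [Nonempty (Fin N)] (hS : S.PosDef) (hM : M.PosDef) : 0 < lamMinGen S M := by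
  obtain ⟨K, hK⟩ := exists_normWeighted_le_mul hS hM.posSemidef
  obtain ⟨x₀, hx₀⟩ := exists_ne (0 : Fin N → ℝ)
  refine (by positivity : 0 < 1 / (K ^ 2 + 1)).trans_le (le_csInf ⟨_, x₀, hx₀, rfl⟩ ?_)
  rintro _ ⟨x, hx, rfl⟩
  have hMx : 0 < x ⬝ᵥ M *ᵥ x := by simpa using hM.dotProduct_mulVec_pos hx
  have hSx : 0 ≤ x ⬝ᵥ S *ᵥ x := by simpa using hS.posSemidef.dotProduct_mulVec_nonneg x
  have hMS : x ⬝ᵥ M *ᵥ x ≤ K ^ 2 * (x ⬝ᵥ S *ᵥ x) := by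
    rw [← sq_normWeighted hM.posSemidef, ← sq_normWeighted hS.posSemidef, ← mul_pow]
    exact pow_le_pow_left₀ (normWeighted_nonneg _ _) (hK x) 2
  rw [div_le_div_iff₀ (by positivity) hMx]
  linarith

lemma normWeighted_wMinus_le (hS : S.PosDef) (hM : M.PosDef) (f : Fin N → ℝ) (y : ℝ) :
    normWeighted M (wMinus S M f y) ≤ 1 / lamMinGen S M * normWeighted M⁻¹ f := by
  cases isEmpty_or_nonempty (Fin N)
  · simp [normWeighted, Subsingleton.elim f 0]
  rw [one_div_mul_eq_div, le_div_iff₀' (lamMinGen_pos hS hM), wMinus]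
  refine mul_normWeighted_inv_mulVec_le hM (fun x => ?_) f
  have hS' := lamMinGen_mul_le hS.posSemidef hM.posSemidef x
  have hM' : 0 ≤ exp (-y) * (x ⬝ᵥ M *ᵥ x) :=
    mul_nonneg (exp_nonneg _) (by simpa using hM.posSemidef.dotProduct_mulVec_nonneg x)
  simp only [add_mulVec, dotProduct_add, smul_mulVec, dotProduct_smul, smul_eq_mul]
  linarith

lemma normWeighted_wPlus_le (hS : S.PosDef) (hM : M.PosDef) (f : Fin N → ℝ) (y : ℝ) :
    normWeighted M (wPlus S M f y) ≤ normWeighted M⁻¹ f := by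
  refine (one_mul _).symm.trans_le (mul_normWeighted_inv_mulVec_le hM (fun x => ?_) f)
  have hS' : 0 ≤ exp (-y) * (x ⬝ᵥ S *ᵥ x) :=
    mul_nonneg (exp_nonneg _) (by simpa using hS.posSemidef.dotProduct_mulVec_nonneg x)
  simp only [add_mulVec, dotProduct_add, smul_mulVec, dotProduct_smul, smul_eq_mul]
  linarith

end Weighted

theorem quad_error_uniform_general {N : ℕ} (S M : Matrix (Fin N) (Fin N) ℝ)
    (hS : S.PosDef) (hM : M.PosDef) (f : Fin N → ℝ)
    (Mm Mp : ℕ) (ym : Fin Mm → ℝ) (τm : Fin Mm → ℝ) (yp : Fin Mp → ℝ) (τp : Fin Mp → ℝ)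
    (hτm : ∀ j, 0 ≤ τm j) (hτp : ∀ j, 0 ≤ τp j)
    (hτmsum : ∑ j, τm j ≤ 1) (hτpsum : ∑ j, τp j ≤ 1)
    (s : ℝ) (hs : s ∈ Set.Ioo (0:ℝ) 1) :
    normWeighted M
        ((beta0 (1 - s) • ∑ j, τm j • wMinus S M f (ym j / (1 - s)) +
            beta0 s • ∑ j, τp j • wPlus S M f (yp j / s)) -
          (beta0 (1 - s) •
              (∫ t in Set.Ioi (0:ℝ), Real.exp (-t) • wMinus S M f (t / (1 - s))) +
            beta0 s •
              (∫ t in Set.Ioi (0:ℝ), Real.exp (-t) • wPlus S M f (t / s)))) ≤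
      (8 / Real.pi) * max 1 (1 / lamMinGen S M) * normWeighted M⁻¹ f := by
  obtain ⟨hs₀, hs₁⟩ := hs
  set T := hM.sqrtEquiv
  set C := max 1 (1 / lamMinGen S M) * normWeighted M⁻¹ f
  have hF := normWeighted_nonneg M⁻¹ f
  have hC : 0 ≤ C := mul_nonneg (zero_le_one.trans (le_max_left _ _)) hF
  have hwm : ∀ y, ‖T (wMinus S M f y)‖ ≤ C := fun y => by
    rw [norm_sqrtEquiv]
    exact (normWeighted_wMinus_le hS hM f y).trans
      (mul_le_mul_of_nonneg_right (le_max_right _ _) hF)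
  have hwp : ∀ y, ‖T (wPlus S M f y)‖ ≤ C := fun y => by
    rw [norm_sqrtEquiv]
    exact (normWeighted_wPlus_le hS hM f y).trans (le_mul_of_one_le_left hF (le_max_left _ _))
  rw [← norm_sqrtEquiv hM, map_sub, map_add, map_add, map_smul, map_smul, map_smul, map_smul,
    add_sub_add_comm, ← smul_sub, ← smul_sub]
  calc _ ≤ (beta0 (1 - s) + beta0 s) * (2 * C) :=
        norm_smul_add_smul_le (beta0_nonneg (by linarith) (by linarith))
          (beta0_nonneg hs₀.le hs₁.le)
          (T.norm_map_sum_smul_sub_map_integral_le hC (fun y => hwm (y / (1 - s))) ym τm hτm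
            hτmsum)
          (T.norm_map_sum_smul_sub_map_integral_le hC (fun y => hwp (y / s)) yp τp hτp hτpsum)
    _ ≤ 4 / π * (2 * C) := by gcongr; exact beta0_one_sub_add_beta0_le hs₀ hs₁
    _ = 8 / π * max 1 (1 / lamMinGen S M) * normWeighted M⁻¹ f := by ring

/-- Remark after Proposition 4.1: the discrepancy between the fully discrete solution
`u(s)` and the semi-discrete solution `ũ(s)` is bounded by
`(8/π) max(1, 1/λ_min(S,M)) ‖f‖_{M⁻¹}`, uniformly in `s ∈ (0,1)` and in all
discretization parameters. -/
theorem quad_error_uniform {N : ℕ} (S M : Matrix (Fin N) (Fin N) ℝ)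
    (hS : S.PosDef) (hM : M.PosDef) (f : Fin N → ℝ)
    (Mm Mp : ℕ) (ym : Fin Mm → ℝ) (τm : Fin Mm → ℝ) (yp : Fin Mp → ℝ) (τp : Fin Mp → ℝ)
    (hym : ∀ j, 0 ≤ ym j) (hyp : ∀ j, 0 ≤ yp j)
    (hτm : ∀ j, 0 ≤ τm j) (hτp : ∀ j, 0 ≤ τp j)
    (hτmsum : ∑ j, τm j ≤ 1) (hτpsum : ∑ j, τp j ≤ 1)
    (s : ℝ) (hs : s ∈ Set.Ioo (0:ℝ) 1) :
    normWeighted M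
        ((beta0 (1 - s) • ∑ j, τm j • wMinus S M f (ym j / (1 - s)) +
            beta0 s • ∑ j, τp j • wPlus S M f (yp j / s)) -
          (beta0 (1 - s) •
              (∫ t in Set.Ioi (0:ℝ), Real.exp (-t) • wMinus S M f (t / (1 - s))) +
            beta0 s •
              (∫ t in Set.Ioi (0:ℝ), Real.exp (-t) • wPlus S M f (t / s)))) ≤
      (8 / Real.pi) * max 1 (1 / lamMinGen S M) * normWeighted M⁻¹ f :=
  quad_error_uniform_general S M hS hM f Mm Mp ym τm yp τp hτm hτp hτmsum hτpsum s hs
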